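/- arXiv:2503.17619 — 7 statements merged into one kernel-verified Lean document; each statement's English description precedes it below -/
import Mathlib

section
/- Let U = span{e₁} ⊆ 𝔽₂², where e₁ = (1,0). Since α·e₁ = 0 and β·e₁ = e₁, both α and β map U into U and hence induce 𝔽₂-linear maps ᾱ and β̄ on the quotient 𝔽₂²/U. Let f : 𝔽₂² → 𝔽₂²/U be an 𝔽₂-linear map satisfying f(αv) = ᾱ·f(v) and f(βv) = β̄·f(v) for all v ∈ 𝔽₂². If f is nonzero, then f equals the canonical quotient projection 𝔽₂² → 𝔽₂²/U. -/
open Matrix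

/-- `α = !![0,1;0,0]` in `M₂(𝔽₂)`. -/
def alphaM : Matrix (Fin 2) (Fin 2) (ZMod 2) := !![0, 1; 0, 0]

/-- `β = !![1,0;0,0]` in `M₂(𝔽₂)`. -/
def betaM : Matrix (Fin 2) (Fin 2) (ZMod 2) := !![1, 0; 0, 0]

/-- `e₁ = (1,0)` in `𝔽₂²`. -/
def e1 : Fin 2 → ZMod 2 := ![1, 0]

/-- `U = span{e₁} ⊆ 𝔽₂²`. -/
def U : Submodule (ZMod 2) (Fin 2 → ZMod 2) := Submodule.span (ZMod 2) {e1}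

lemma alphaM_maps_U : U ≤ U.comap alphaM.mulVecLin := by
  rw [U, Submodule.span_le]
  rintro x hx
  simp only [Set.mem_singleton_iff] at hx
  subst hx
  have h : alphaM.mulVecLin e1 = 0 := by decide
  simp [Submodule.mem_comap, h]

lemma betaM_maps_U : U ≤ U.comap betaM.mulVecLin := by
  rw [U, Submodule.span_le]
  rintro x hx
  simp only [Set.mem_singleton_iff] at hx
  subst hx
  have h : betaM.mulVecLin e1 = e1 := by
    ext i
    fin_cases i <;>
      simp [betaM, e1, Matrix.mulVecLin_apply, Matrix.mulVec, dotProduct, Fin.sum_univ_two]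
  have h1 : e1 ∈ U := Submodule.subset_span (Set.mem_singleton e1)
  rw [SetLike.mem_coe, Submodule.mem_comap, h]
  exact h1

/-- The map `ᾱ` induced by `α` on `𝔽₂²/U`. -/
noncomputable def alphaBar :
    ((Fin 2 → ZMod 2) ⧸ U) →ₗ[ZMod 2] ((Fin 2 → ZMod 2) ⧸ U) :=
  Submodule.mapQ U U alphaM.mulVecLin alphaM_maps_U

/-- The map `β̄` induced by `β` on `𝔽₂²/U`. -/
noncomputable def betaBar :
    ((Fin 2 → ZMod 2) ⧸ U) →ₗ[ZMod 2] ((Fin 2 → ZMod 2) ⧸ U) :=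
  Submodule.mapQ U U betaM.mulVecLin betaM_maps_U

/-- A nonzero linear map `f : 𝔽₂² → 𝔽₂²/U` intertwining `α` with `ᾱ` and `β` with `β̄`
equals the canonical quotient projection. -/
theorem stmt1
    (f : (Fin 2 → ZMod 2) →ₗ[ZMod 2] ((Fin 2 → ZMod 2) ⧸ U))
    (hα : ∀ v, f (alphaM.mulVec v) = alphaBar (f v))
    (hβ : ∀ v, f (betaM.mulVec v) = betaBar (f v))
    (hf : f ≠ 0) :
    f = U.mkQ := by
  classical
  set e2 : Fin 2 → ZMod 2 := ![0, 1] with he2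
  have memU : ∀ x : Fin 2 → ZMod 2, x ∈ U ↔ x 1 = 0 := by
    intro x
    constructor
    · intro hx
      rw [U, Submodule.mem_span_singleton] at hx
      obtain ⟨a, ha⟩ := hx
      rw [← ha]
      simp [e1]
    · intro hx
      rw [U, Submodule.mem_span_singleton]
      refine ⟨x 0, ?_⟩
      funext i
      fin_cases i <;> simp [e1, hx]
  have decomp : ∀ v : Fin 2 → ZMod 2, v = v 0 • e1 + v 1 • e2 := by
    intro v
    funext i
    fin_cases i <;> simp [e1, e2]
  have he1U : e1 ∈ U := Submodule.subset_span (Set.mem_singleton e1)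
  have hfe1 : f e1 = 0 := by
    have h1 : alphaM.mulVec e2 = e1 := by
      funext i
      fin_cases i <;> simp [alphaM, e1, e2, Matrix.mulVec, dotProduct, Fin.sum_univ_two]
    have h2 : f (alphaM.mulVec e2) = alphaBar (f e2) := hα e2
    rw [h1] at h2
    obtain ⟨w, hw⟩ := Submodule.mkQ_surjective U (f e2)
    rw [← hw] at h2
    have h3 : alphaBar (U.mkQ w) = U.mkQ (alphaM.mulVecLin w) := by
      simp [alphaBar, Submodule.mapQ_apply]
    rw [h2, h3, Submodule.mkQ_apply, Submodule.Quotient.mk_eq_zero]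
    rw [memU]
    simp [alphaM, Matrix.mulVecLin_apply, Matrix.mulVec, dotProduct, Fin.sum_univ_two]
  have hfv : ∀ v : Fin 2 → ZMod 2, f v = v 1 • f e2 := by
    intro v
    conv_lhs => rw [decomp v]
    simp [hfe1]
  have hfe2 : f e2 ≠ 0 := by
    intro h0
    apply hf
    refine LinearMap.ext fun v => ?_
    simp [hfv v, h0]
  obtain ⟨w, hw⟩ := Submodule.mkQ_surjective U (f e2)
  have hw1 : w 1 = 1 := by
    have : w 1 ≠ 0 := by
      intro h0
      apply hfe2
      rw [← hw, Submodule.mkQ_apply, Submodule.Quotient.mk_eq_zero, memU]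
      exact h0
    have h2 : ∀ a : ZMod 2, a ≠ 0 → a = 1 := by decide
    exact h2 _ this
  have hkey : f e2 = U.mkQ e2 := by
    rw [← hw, Submodule.mkQ_apply, Submodule.mkQ_apply, Submodule.Quotient.eq, memU]
    simp [hw1, e2]
  refine LinearMap.ext fun v => ?_
  rw [hfv v, hkey]
  conv_rhs => rw [decomp v]
  have : U.mkQ e1 = 0 := by
    rw [Submodule.mkQ_apply, Submodule.Quotient.mk_eq_zero]; exact he1U
  simp [this]
  exact Or.inr he1U
end

section
/- Let U = span{e₁} ⊆ 𝔽₂², where e₁ = (1,0), and let ᾱ, β̄ denote the 𝔽₂-linear maps induced by α and β on the quotient 𝔽₂²/U. Then there is no nonzero 𝔽₂-linear map f : U → 𝔽₂²/U satisfying f(αu) = ᾱ·f(u) and f(βu) = β̄·f(u) for all u ∈ U. -/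
open Matrix

/-- The action of `α` restricted to `U`. -/
def alphaU : U →ₗ[ZMod 2] U :=
  LinearMap.restrict alphaM.mulVecLin fun x hx => alphaM_maps_U hx

/-- The action of `β` restricted to `U`. -/
def betaU : U →ₗ[ZMod 2] U :=
  LinearMap.restrict betaM.mulVecLin fun x hx => betaM_maps_U hx

/-- There is no nonzero linear map `f : U → 𝔽₂²/U` intertwining the action of `α` on `U`
with `ᾱ` and the action of `β` on `U` with `β̄`. -/
theorem stmt3 :
    ¬ ∃ f : U →ₗ[ZMod 2] ((Fin 2 → ZMod 2) ⧸ U),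
      (∀ u : U, f (alphaU u) = alphaBar (f u)) ∧
      (∀ u : U, f (betaU u) = betaBar (f u)) ∧
      f ≠ 0 := by
  rintro ⟨f, -, hβ, hne⟩
  have he1 : e1 ∈ U := Submodule.subset_span rfl
  set u1 : U := ⟨e1, he1⟩ with hu1
  have hbu : betaU u1 = u1 := by
    apply Subtype.ext
    show betaM.mulVecLin e1 = e1
    decide
  have hbar : ∀ y, betaBar y = 0 := by
    intro y
    obtain ⟨v, rfl⟩ := Submodule.Quotient.mk_surjective U y
    show Submodule.Quotient.mk (betaM.mulVecLin v) = 0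
    rw [Submodule.Quotient.mk_eq_zero]
    have hv : betaM.mulVecLin v = (v 0) • e1 := by
      ext i
      fin_cases i <;>
        simp [betaM, e1, Matrix.mulVecLin_apply, Matrix.mulVec, dotProduct,
          Fin.sum_univ_two]
    rw [hv]
    exact U.smul_mem _ he1
  have hf1 : f u1 = 0 := by
    have := hβ u1
    rw [hbu, hbar] at this
    exact this
  apply hne
  ext ⟨x, hx⟩
  obtain ⟨c, hc⟩ := Submodule.mem_span_singleton.mp hx
  have hxe : (⟨x, hx⟩ : U) = c • u1 := Subtype.ext hc.symm
  rw [hxe, _root_.map_smul, hf1, smul_zero]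
  rfl
end

section
/- Let a, b be nonnegative integers, V = 𝔽₂², U = span{e₁} ⊆ V with e₁ = (1,0), and let M = U^a × V^b, viewed as a subspace of V^{a+b} on which α and β act diagonally (componentwise by matrix–vector multiplication); M is invariant under this action. Let T ⊆ M be an 𝔽₂-subspace with α·T ⊆ T and β·T ⊆ T. Suppose that: (i) the projection M → U^a onto the first a coordinates restricts to a surjection on T, and (ii) the composite map M → V^b → (V/U)^b, given by projecting onto the last b coordinates and then reducing each coordinate modulo U, restricts to a surjection on T. Then T = M. -/
open Matrix

/-- The diagonal (componentwise) action of a `2×2` matrix `m` over `𝔽₂` on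
`(𝔽₂²)^a × (𝔽₂²)^b`. -/
def diagAct (m : Matrix (Fin 2) (Fin 2) (ZMod 2)) (a b : ℕ) :
    ((Fin a → (Fin 2 → ZMod 2)) × (Fin b → (Fin 2 → ZMod 2))) →ₗ[ZMod 2]
    ((Fin a → (Fin 2 → ZMod 2)) × (Fin b → (Fin 2 → ZMod 2))) :=
  LinearMap.prodMap
    (LinearMap.pi fun i => m.mulVecLin ∘ₗ LinearMap.proj i)
    (LinearMap.pi fun j => m.mulVecLin ∘ₗ LinearMap.proj j)

/-- The submodule `M = U^a × V^b` of `V^a × V^b` where `V = 𝔽₂²`. -/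
def Msub (a b : ℕ) :
    Submodule (ZMod 2) ((Fin a → (Fin 2 → ZMod 2)) × (Fin b → (Fin 2 → ZMod 2))) :=
  (Submodule.pi Set.univ fun _ : Fin a => U).prod ⊤

lemma mem_U_iff (v : Fin 2 → ZMod 2) : v ∈ U ↔ v 1 = 0 := by
  constructor
  · intro h
    obtain ⟨c, rfl⟩ := Submodule.mem_span_singleton.mp h
    simp [e1]
  · intro h
    rw [U, Submodule.mem_span_singleton]
    exact ⟨v 0, by funext i; fin_cases i <;> simp [e1, h]⟩

lemma U_eval {v : Fin 2 → ZMod 2} (h : v ∈ U) : (v 0) • e1 = v := by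
  funext i
  fin_cases i <;> simp [e1, (mem_U_iff v).mp h]

lemma smul_e1_mem (c : ZMod 2) : c • e1 ∈ U :=
  Submodule.smul_mem _ _ (Submodule.mem_span_singleton_self _)

lemma alpha_mulVecLin (v : Fin 2 → ZMod 2) : alphaM.mulVecLin v = (v 1) • e1 := by
  funext i
  fin_cases i <;>
    simp [alphaM, e1, Matrix.mulVecLin_apply, Matrix.mulVec, dotProduct,
      Fin.sum_univ_two]

lemma beta_mulVecLin (v : Fin 2 → ZMod 2) : betaM.mulVecLin v = (v 0) • e1 := by
  funext i
  fin_cases i <;>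
    simp [betaM, e1, Matrix.mulVecLin_apply, Matrix.mulVec, dotProduct,
      Fin.sum_univ_two]

lemma diagAct_apply (m : Matrix (Fin 2) (Fin 2) (ZMod 2)) (a b : ℕ)
    (t : (Fin a → (Fin 2 → ZMod 2)) × (Fin b → (Fin 2 → ZMod 2))) :
    diagAct m a b t = (fun i => m.mulVecLin (t.1 i), fun j => m.mulVecLin (t.2 j)) := by
  rfl

/-- Case IV cofavored-submodule classification: a subspace `T` of `M = U^a × V^b` closed
under the diagonal actions of `α` and `β` which surjects onto `U^a` (via the first `a`
coordinates) and onto `(V/U)^b` (via the last `b` coordinates reduced mod `U`)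
must be all of `M`. -/
theorem stmt4 (a b : ℕ)
    (T : Submodule (ZMod 2) ((Fin a → (Fin 2 → ZMod 2)) × (Fin b → (Fin 2 → ZMod 2))))
    (hTM : T ≤ Msub a b)
    (hα : ∀ t ∈ T, diagAct alphaM a b t ∈ T)
    (hβ : ∀ t ∈ T, diagAct betaM a b t ∈ T)
    (hsurj₁ : ∀ x : Fin a → (Fin 2 → ZMod 2), (∀ i, x i ∈ U) → ∃ t ∈ T, t.1 = x)
    (hsurj₂ : ∀ y : Fin b → (Fin 2 → ZMod 2), ∃ t ∈ T, ∀ j, t.2 j - y j ∈ U) :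
    T = Msub a b := by
  -- Step A: {0} × U^b ⊆ T
  have hA : ∀ z : Fin b → (Fin 2 → ZMod 2), (∀ j, z j ∈ U) →
      ((0, z) : (Fin a → (Fin 2 → ZMod 2)) × (Fin b → (Fin 2 → ZMod 2))) ∈ T := by
    intro z hz
    obtain ⟨t, htT, ht⟩ := hsurj₂ (fun j => ![0, z j 0])
    have hEq : diagAct alphaM a b t = (0, z) := by
      rw [diagAct_apply]
      have h1 : ∀ i, t.1 i ∈ U := fun i => (hTM htT).1 i (Set.mem_univ i)
      refine Prod.ext ?_ ?_
      · funext i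
        show alphaM.mulVecLin (t.1 i) = 0
        rw [alpha_mulVecLin, (mem_U_iff _).mp (h1 i), zero_smul]
      · funext j
        show alphaM.mulVecLin (t.2 j) = z j
        have h2 : t.2 j 1 = z j 0 := by
          have := (mem_U_iff _).mp (ht j)
          have : t.2 j 1 - (![0, z j 0] : Fin 2 → ZMod 2) 1 = 0 := this
          simpa using sub_eq_zero.mp this
        simp only [alpha_mulVecLin, h2]
        have h3 : z j 0 • e1 = z j := U_eval (hz j)
        exact h3
    rw [← hEq]
    exact hα t htT
  -- Step B: U^a × {0} ⊆ T
  have hB : ∀ x : Fin a → (Fin 2 → ZMod 2), (∀ i, x i ∈ U) →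
      ((x, 0) : (Fin a → (Fin 2 → ZMod 2)) × (Fin b → (Fin 2 → ZMod 2))) ∈ T := by
    intro x hx
    obtain ⟨t, htT, ht⟩ := hsurj₁ x hx
    have hβt := hβ t htT
    rw [diagAct_apply] at hβt
    have hfst : (fun i => betaM.mulVecLin (t.1 i)) = x := by
      funext i
      rw [beta_mulVecLin, ht]
      exact U_eval (hx i)
    rw [hfst] at hβt
    have hw : ((0, fun j => betaM.mulVecLin (t.2 j)) :
        (Fin a → (Fin 2 → ZMod 2)) × (Fin b → (Fin 2 → ZMod 2))) ∈ T := by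
      apply hA
      intro j
      rw [beta_mulVecLin]
      exact smul_e1_mem _
    have := T.sub_mem hβt hw
    simpa using this
  -- Conclusion
  apply le_antisymm hTM
  rintro ⟨x, y⟩ hxy
  have hx : ∀ i, x i ∈ U := fun i => hxy.1 i (Set.mem_univ i)
  obtain ⟨t, htT, ht⟩ := hsurj₂ y
  have ht1 : ∀ i, t.1 i ∈ U := fun i => (hTM htT).1 i (Set.mem_univ i)
  have hd1 : ((x - t.1, 0) : (Fin a → (Fin 2 → ZMod 2)) × (Fin b → (Fin 2 → ZMod 2))) ∈ T :=
    hB _ (fun i => U.sub_mem (hx i) (ht1 i))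
  have hd2 : ((0, y - t.2) : (Fin a → (Fin 2 → ZMod 2)) × (Fin b → (Fin 2 → ZMod 2))) ∈ T := by
    apply hA
    intro j
    have := ht j
    have : -(t.2 j - y j) ∈ U := U.neg_mem this
    simpa using this
  have := T.add_mem (T.add_mem htT hd1) hd2
  have hEq : t + (x - t.1, 0) + (0, y - t.2) = (x, y) := by
    ext <;> simp
  rwa [hEq] at this
end

section
/- Let V, W be finite-dimensional 𝔽₂-vector spaces with subspaces V₀ ⊆ V and W₀ ⊆ W. Then the number of injective 𝔽₂-linear maps f : V → W such that f(V₀) ⊆ W₀ and the induced map V/V₀ → W/W₀ is injective equals #Inj(V₀, W₀) · #Inj(V/V₀, W/W₀) · 2^{dim(V/V₀) · dim W₀}. -/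
/-!
A linear map `f : V → W` with `f(V₀) ⊆ W₀` induces the pair `(f|V₀, f̄)` with
`f̄ : V/V₀ → W/W₀`, and `f` is injective with `f⁻¹(W₀) = V₀` exactly when both components
are injective. Over a field every pair arises (extend `f|V₀` to `V`, then lift the defect
`V/V₀ → W/W₀` to `W`), and two maps with the same pair differ by a map
`V → V/V₀ → W₀ → W`. So every fibre of `f ↦ (f|V₀, f̄)` is a coset of a copy of
`Hom(V/V₀, W₀)`, which over `𝔽₂` has `2 ^ (dim (V/V₀) · dim W₀)` elements.
-/

open Function LinearMap

theorem LinearMap.natCard_preimage_of_surjective {R M N : Type*} [Ring R] [AddCommGroup M]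
    [AddCommGroup N] [Module R M] [Module R N] (π : M →ₗ[R] N) (hπ : Surjective π) (S : Set N) :
    Nat.card (π ⁻¹' S) = Nat.card S * Nat.card (ker π) := by
  let σ := surjInv hπ
  have hσ : ∀ y, π (σ y) = y := surjInv_eq hπ
  rw [← Nat.card_prod]
  exact Nat.card_congr
    { toFun := fun x => (⟨π x, x.2⟩, ⟨x - σ (π x), by simp [hσ]⟩)
      invFun := fun yk => ⟨σ yk.1 + yk.2, by simp [hσ, yk.1.2]⟩
      left_inv := fun x => by simp
      right_inv := fun yk => by ext <;> simp [hσ] }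

namespace Submodule

section Ring

variable {R M M₂ : Type*} [Ring R] [AddCommGroup M] [Module R M] [AddCommGroup M₂]
  [Module R M₂] {p : Submodule R M} {q : Submodule R M₂}

theorem injective_mapQ_iff (f : M →ₗ[R] M₂) (h : p ≤ q.comap f) :
    Injective (p.mapQ q f h) ↔ q.comap f ≤ p := by
  rw [← ker_eq_bot, ker_mapQ, ← le_ker_iff_map, ker_mkQ]

theorem injective_restrict_and_mapQ_iff (f : M →ₗ[R] M₂) (h : p ≤ q.comap f) :
    Injective (f.restrict h) ∧ Injective (p.mapQ q f h) ↔ Injective f ∧ q.comap f ≤ p := by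
  rw [injective_mapQ_iff]
  refine ⟨fun ⟨hr, hp⟩ => ⟨?_, hp⟩, fun ⟨hf, hp⟩ => ⟨?_, hp⟩⟩
  · refine (injective_iff_map_eq_zero f).2 fun v hv => ?_
    have hvp : v ∈ p := hp (by simp [hv])
    simpa using hr (a₁ := ⟨v, hvp⟩) (a₂ := 0) (Subtype.ext (by simpa using hv))
  · exact fun a b hab => Subtype.ext (hf (congrArg Subtype.val hab))

end Ring

section CommRing

variable {R M M₂ : Type*} [CommRing R] [AddCommGroup M] [Module R M] [AddCommGroup M₂]
  [Module R M₂] (p : Submodule R M) (q : Submodule R M₂)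

def restrictMapQ : compatibleMaps p q →ₗ[R] (p →ₗ[R] q) × (M ⧸ p →ₗ[R] M₂ ⧸ q) :=
  LinearMap.prod
    { toFun := fun f => f.1.restrict f.2
      map_add' := fun _ _ => rfl
      map_smul' := fun _ _ => rfl }
    (mapQLinear p q)

@[simp]
theorem restrictMapQ_apply (f : compatibleMaps p q) :
    restrictMapQ p q f = (f.1.restrict f.2, p.mapQ q f.1 f.2) :=
  rfl

variable {p q} in
theorem mem_ker_restrictMapQ_iff (f : compatibleMaps p q) :
    f ∈ ker (restrictMapQ p q) ↔ (∀ x ∈ p, f.1 x = 0) ∧ ∀ x, f.1 x ∈ q := by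
  rw [mem_ker, restrictMapQ_apply, Prod.mk_eq_zero]
  refine and_congr
    ⟨fun h x hx => congr(($h ⟨x, hx⟩ : M₂)), fun h => LinearMap.ext fun x => Subtype.ext (h x x.2)⟩
    ⟨fun h x => (Quotient.mk_eq_zero q).1 congr($h (Quotient.mk x)),
      fun h => linearMap_qext _ (LinearMap.ext fun x => (Quotient.mk_eq_zero q).2 (h x))⟩

noncomputable def kerRestrictMapQEquiv : ker (restrictMapQ p q) ≃ (M ⧸ p →ₗ[R] q) where
  toFun f :=
    have hf := (mem_ker_restrictMapQ_iff f.1).1 f.2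
    p.liftQ (codRestrict q f.1.1 hf.2) fun x hx => by simpa using hf.1 x hx
  invFun k := ⟨⟨q.subtype ∘ₗ k ∘ₗ p.mkQ, fun x hx => by simp [(Quotient.mk_eq_zero p).2 hx]⟩,
    (mem_ker_restrictMapQ_iff _).2 ⟨fun x hx => by simp [(Quotient.mk_eq_zero p).2 hx], by simp⟩⟩
  left_inv f := by ext x; simp
  right_inv k := by ext x; simp

end CommRing

section Field

variable {K M M₂ : Type*} [Field K] [AddCommGroup M] [Module K M] [AddCommGroup M₂]
  [Module K M₂] (p : Submodule K M) (q : Submodule K M₂)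

theorem restrictMapQ_surjective : Surjective (restrictMapQ p q) := by
  rintro ⟨g, h⟩
  obtain ⟨e, he⟩ := LinearMap.exists_extend (q.subtype ∘ₗ g)
  have he_apply (x : p) : e x = g x := congr($he x)
  have he_compat : p ≤ q.comap e := fun x hx => by
    simpa only [mem_comap, he_apply ⟨x, hx⟩] using (g ⟨x, hx⟩).2
  obtain ⟨d, hd⟩ := Module.projective_lifting_property q.mkQ (h - p.mapQ q e he_compat)
    q.mkQ_surjective
  have hd_apply (x : M ⧸ p) : q.mkQ (d x) = h x - p.mapQ q e he_compat x := congr($hd x)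
  refine ⟨⟨e + d ∘ₗ p.mkQ, fun x hx => by
    simpa [(Quotient.mk_eq_zero p).2 hx] using he_compat hx⟩, ?_⟩
  ext x
  · change e x + d (p.mkQ x) = g x
    simp [he_apply, (Quotient.mk_eq_zero p).2 x.2]
  · change q.mkQ (e x + d (p.mkQ x)) = h (p.mkQ x)
    rw [map_add, hd_apply]
    simp

theorem natCard_injective_comap_eq :
    Nat.card {f : M →ₗ[K] M₂ //
        Injective f ∧ (∀ v ∈ p, f v ∈ q) ∧ (∀ v : M, f v ∈ q → v ∈ p)} =
      Nat.card {g : p →ₗ[K] q // Injective g} *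
        Nat.card {h : M ⧸ p →ₗ[K] M₂ ⧸ q // Injective h} * Nat.card (M ⧸ p →ₗ[K] q) := by
  let e : {f : M →ₗ[K] M₂ //
        Injective f ∧ (∀ v ∈ p, f v ∈ q) ∧ (∀ v : M, f v ∈ q → v ∈ p)} ≃
      restrictMapQ p q ⁻¹' {gh | Injective gh.1 ∧ Injective gh.2} :=
    { toFun := fun f => ⟨⟨f.1, f.2.2.1⟩,
        (injective_restrict_and_mapQ_iff f.1 f.2.2.1).2 ⟨f.2.1, f.2.2.2⟩⟩
      invFun := fun f => ⟨f.1.1, (injective_restrict_and_mapQ_iff f.1.1 f.1.2).1 f.2 |>.1, f.1.2,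
        (injective_restrict_and_mapQ_iff f.1.1 f.1.2).1 f.2 |>.2⟩ }
  have hpairs : Nat.card {gh : (p →ₗ[K] q) × (M ⧸ p →ₗ[K] M₂ ⧸ q) |
      Injective gh.1 ∧ Injective gh.2} =
      Nat.card {g : p →ₗ[K] q // Injective g} *
        Nat.card {h : M ⧸ p →ₗ[K] M₂ ⧸ q // Injective h} :=
    (Nat.card_congr (Equiv.subtypeProdEquivProd (p := fun g : p →ₗ[K] q => Injective g)
      (q := fun h : M ⧸ p →ₗ[K] M₂ ⧸ q => Injective h))).trans (Nat.card_prod _ _)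
  rw [Nat.card_congr e, natCard_preimage_of_surjective _ (restrictMapQ_surjective p q),
    Nat.card_congr (kerRestrictMapQEquiv p q), hpairs]

end Field

end Submodule

/-- Counting morphisms in the category `𝒞` of pairs `(V₀ ⊆ V)` of finite-dimensional
`𝔽₂`-vector spaces: the number of injective linear maps `f : V → W` carrying `V₀` into `W₀`
whose induced map `V/V₀ → W/W₀` is injective (equivalently, with `f ⁻¹ (W₀) = V₀`) equals
`#Inj(V₀, W₀) · #Inj(V/V₀, W/W₀) · 2 ^ (dim (V/V₀) · dim W₀)`. -/
theorem stmt6 (V W : Type) [AddCommGroup V] [Module (ZMod 2) V]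
    [AddCommGroup W] [Module (ZMod 2) W]
    [FiniteDimensional (ZMod 2) V] [FiniteDimensional (ZMod 2) W]
    (V₀ : Submodule (ZMod 2) V) (W₀ : Submodule (ZMod 2) W) :
    Nat.card {f : V →ₗ[ZMod 2] W //
        Function.Injective f ∧ (∀ v ∈ V₀, f v ∈ W₀) ∧ (∀ v : V, f v ∈ W₀ → v ∈ V₀)} =
      Nat.card {g : V₀ →ₗ[ZMod 2] W₀ // Function.Injective g} *
        Nat.card {h : (V ⧸ V₀) →ₗ[ZMod 2] (W ⧸ W₀) // Function.Injective h} *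
        2 ^ (Module.finrank (ZMod 2) (V ⧸ V₀) * Module.finrank (ZMod 2) W₀) := by
  rw [Submodule.natCard_injective_comap_eq, Module.natCard_eq_pow_finrank (K := ZMod 2) (V := V ⧸ V₀ →ₗ[ZMod 2] W₀),
    Module.finrank_linearMap, Nat.card_zmod]
end

section
/- Let m, n, a, b be nonnegative integers with a ≤ n and b ≤ m, and fix injective 𝔽₂-linear maps λ : 𝔽₂^a → 𝔽₂^n and ψ : 𝔽₂^b → 𝔽₂^m. Then the number of m×n matrices T over 𝔽₂ such that T∘λ = 0 (the image of λ lies in the kernel of T) and Tᵀ∘ψ = 0 (the image of ψ lies in the kernel of the transpose of T) equals 2^{(n−a)(m−b)}. Equivalently, a uniformly random m×n matrix over 𝔽₂ satisfies both conditions with probability 2^{−am − b(n−a)}. -/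
open Matrix

section aux

variable {K : Type*} [Field K] {m n c q : ℕ}

/-- Right multiplication by a fixed matrix, as a linear map. -/
def rmulLin (N : Matrix (Fin n) (Fin c) K) :
    Matrix (Fin m) (Fin n) K →ₗ[K] Matrix (Fin m) (Fin c) K where
  toFun T := T * N
  map_add' x y := Matrix.add_mul x y N
  map_smul' r x := Matrix.smul_mul r x N

@[simp] lemma rmulLin_apply (N : Matrix (Fin n) (Fin c) K) (T : Matrix (Fin m) (Fin n) K) :
    rmulLin N T = T * N := rfl

/-- Left multiplication by a fixed matrix, as a linear map. -/
def lmulLin (N : Matrix (Fin q) (Fin m) K) :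
    Matrix (Fin m) (Fin n) K →ₗ[K] Matrix (Fin q) (Fin n) K where
  toFun T := N * T
  map_add' x y := Matrix.mul_add N x y
  map_smul' r x := Matrix.mul_smul N r x

@[simp] lemma lmulLin_apply (N : Matrix (Fin q) (Fin m) K) (T : Matrix (Fin m) (Fin n) K) :
    lmulLin N T = N * T := rfl

end aux

set_option maxHeartbeats 1600000 in
/-- Given injective linear maps `λ : 𝔽₂^a → 𝔽₂^n` and `ψ : 𝔽₂^b → 𝔽₂^m`, the number of
`m×n` matrices `T` over `𝔽₂` whose kernel contains the image of `λ` and whose transpose's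
kernel contains the image of `ψ` equals `2 ^ ((n-a)(m-b))`. -/
theorem stmt8 (m n a b : ℕ) (han : a ≤ n) (hbm : b ≤ m)
    (l : (Fin a → ZMod 2) →ₗ[ZMod 2] (Fin n → ZMod 2)) (hl : Function.Injective l)
    (p : (Fin b → ZMod 2) →ₗ[ZMod 2] (Fin m → ZMod 2)) (hp : Function.Injective p) :
    Nat.card {T : Matrix (Fin m) (Fin n) (ZMod 2) //
        (∀ x, T.mulVec (l x) = 0) ∧ (∀ y, Tᵀ.mulVec (p y) = 0)} =
      2 ^ ((n - a) * (m - b)) := by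
  classical
  set L : Matrix (Fin n) (Fin a) (ZMod 2) := LinearMap.toMatrix' l with hLdef
  set Ψ : Matrix (Fin m) (Fin b) (ZMod 2) := LinearMap.toMatrix' p with hΨdef
  have hLmul : ∀ x, L.mulVec x = l x := by
    intro x
    rw [← Matrix.toLin'_apply, hLdef, Matrix.toLin'_toMatrix']
  have hΨmul : ∀ y, Ψ.mulVec y = p y := by
    intro y
    rw [← Matrix.toLin'_apply, hΨdef, Matrix.toLin'_toMatrix']
  -- left inverses
  obtain ⟨g, hg⟩ := l.exists_leftInverse_of_injective (LinearMap.ker_eq_bot.mpr hl)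
  obtain ⟨h, hh⟩ := p.exists_leftInverse_of_injective (LinearMap.ker_eq_bot.mpr hp)
  set C : Matrix (Fin a) (Fin n) (ZMod 2) := LinearMap.toMatrix' g with hCdef
  set D : Matrix (Fin b) (Fin m) (ZMod 2) := LinearMap.toMatrix' h with hDdef
  have hCL : C * L = 1 := by
    rw [hCdef, hLdef, ← LinearMap.toMatrix'_comp, hg, LinearMap.toMatrix'_id]
  have hDΨ : D * Ψ = 1 := by
    rw [hDdef, hΨdef, ← LinearMap.toMatrix'_comp, hh, LinearMap.toMatrix'_id]
  have hΨD : Ψᵀ * Dᵀ = 1 := by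
    rw [← Matrix.transpose_mul, hDΨ, Matrix.transpose_one]
  -- reformulate the conditions as matrix equations
  have hmatinj : ∀ {q r : ℕ} (M : Matrix (Fin q) (Fin r) (ZMod 2)),
      (∀ x, M.mulVec x = 0) → M = 0 := by
    intro q r M hM
    have : Matrix.toLin' M = Matrix.toLin' (0 : Matrix (Fin q) (Fin r) (ZMod 2)) := by
      ext x
      simpa [Matrix.toLin'_apply] using congrFun (hM (Pi.single x 1)) _
    exact Matrix.toLin'.injective this
  have hcond1 : ∀ T : Matrix (Fin m) (Fin n) (ZMod 2),
      (∀ x, T.mulVec (l x) = 0) ↔ T * L = 0 := by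
    intro T
    constructor
    · intro hT
      apply hmatinj
      intro x
      rw [← Matrix.mulVec_mulVec, hLmul]
      exact hT x
    · intro hT x
      rw [← hLmul, Matrix.mulVec_mulVec, hT, Matrix.zero_mulVec]
  have hcond2 : ∀ T : Matrix (Fin m) (Fin n) (ZMod 2),
      (∀ y, Tᵀ.mulVec (p y) = 0) ↔ Ψᵀ * T = 0 := by
    intro T
    constructor
    · intro hT
      have h0 : Tᵀ * Ψ = 0 := by
        apply hmatinj
        intro y
        rw [← Matrix.mulVec_mulVec, hΨmul]
        exact hT y
      have := congrArg Matrix.transpose h0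
      simpa [Matrix.transpose_mul] using this
    · intro hT y
      have h0 : Tᵀ * Ψ = 0 := by
        have := congrArg Matrix.transpose hT
        simpa [Matrix.transpose_mul] using this
      rw [← hΨmul, Matrix.mulVec_mulVec, h0, Matrix.zero_mulVec]
  -- the solution set as the kernel of a linear map on a kernel
  set φ₁ : Matrix (Fin m) (Fin n) (ZMod 2) →ₗ[ZMod 2] Matrix (Fin m) (Fin a) (ZMod 2) :=
    rmulLin L with hφ₁def
  set Q : Submodule (ZMod 2) (Matrix (Fin m) (Fin n) (ZMod 2)) := LinearMap.ker φ₁ with hQdef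
  set G : Q →ₗ[ZMod 2] Matrix (Fin b) (Fin n) (ZMod 2) :=
    (lmulLin Ψᵀ).comp Q.subtype with hGdef
  -- the solution set is (equivalent to) the kernel of G
  have hequiv : {T : Matrix (Fin m) (Fin n) (ZMod 2) //
        (∀ x, T.mulVec (l x) = 0) ∧ (∀ y, Tᵀ.mulVec (p y) = 0)} ≃ LinearMap.ker G := by
    refine ⟨fun T => ⟨⟨T.1, ?_⟩, ?_⟩, fun T => ⟨T.1.1, ?_, ?_⟩, fun T => rfl, fun T => rfl⟩
    · exact LinearMap.mem_ker.mpr ((hcond1 T.1).mp T.2.1)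
    · exact LinearMap.mem_ker.mpr ((hcond2 T.1).mp T.2.2)
    · exact (hcond1 T.1.1).mpr (LinearMap.mem_ker.mp T.1.2)
    · exact (hcond2 T.1.1).mpr (LinearMap.mem_ker.mp T.2)
  rw [Nat.card_congr hequiv]
  -- now compute the finrank of ker G
  have hrange1 : LinearMap.range φ₁ = ⊤ := by
    rw [LinearMap.range_eq_top]
    intro S
    exact ⟨S * C, by simp only [hφ₁def, rmulLin_apply]; rw [Matrix.mul_assoc, hCL, Matrix.mul_one]⟩
  set ψ₁ : Matrix (Fin b) (Fin n) (ZMod 2) →ₗ[ZMod 2] Matrix (Fin b) (Fin a) (ZMod 2) :=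
    rmulLin L with hψ₁def
  have hrange2 : LinearMap.range ψ₁ = ⊤ := by
    rw [LinearMap.range_eq_top]
    intro S
    exact ⟨S * C, by simp only [hψ₁def, rmulLin_apply]; rw [Matrix.mul_assoc, hCL, Matrix.mul_one]⟩
  have hrangeG : LinearMap.range G = LinearMap.ker ψ₁ := by
    apply le_antisymm
    · rintro _ ⟨⟨T, hT⟩, rfl⟩
      have hTL : T * L = 0 := LinearMap.mem_ker.mp hT
      simp only [hGdef, LinearMap.mem_ker, LinearMap.comp_apply, Submodule.coe_subtype,
        lmulLin_apply, hψ₁def, rmulLin_apply]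
      rw [Matrix.mul_assoc, hTL, Matrix.mul_zero]
    · intro S hS
      have hSL : S * L = 0 := LinearMap.mem_ker.mp hS
      refine ⟨⟨Dᵀ * S, ?_⟩, ?_⟩
      · simp only [hQdef, LinearMap.mem_ker, hφ₁def, rmulLin_apply]
        rw [Matrix.mul_assoc, hSL, Matrix.mul_zero]
      · simp only [hGdef, LinearMap.comp_apply, Submodule.coe_subtype, lmulLin_apply]
        rw [← Matrix.mul_assoc, hΨD, Matrix.one_mul]
  -- finrank bookkeeping
  obtain ⟨c, rfl⟩ := le_iff_exists_add.mp han
  obtain ⟨d, rfl⟩ := le_iff_exists_add.mp hbm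
  have hM : Module.finrank (ZMod 2) (Matrix (Fin (b + d)) (Fin (a + c)) (ZMod 2))
      = (b + d) * (a + c) := by
    rw [Module.finrank_matrix]; simp
  have hMa : Module.finrank (ZMod 2) (Matrix (Fin (b + d)) (Fin a) (ZMod 2))
      = (b + d) * a := by
    rw [Module.finrank_matrix]; simp
  have hBn : Module.finrank (ZMod 2) (Matrix (Fin b) (Fin (a + c)) (ZMod 2))
      = b * (a + c) := by
    rw [Module.finrank_matrix]; simp
  have hBa : Module.finrank (ZMod 2) (Matrix (Fin b) (Fin a) (ZMod 2)) = b * a := by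
    rw [Module.finrank_matrix]; simp
  have hR1 : Module.finrank (ZMod 2) ↥(LinearMap.range φ₁) = (b + d) * a := by
    rw [(LinearEquiv.ofEq _ _ hrange1).finrank_eq, finrank_top, hMa]
  have hR2 : Module.finrank (ZMod 2) ↥(LinearMap.range ψ₁) = b * a := by
    rw [(LinearEquiv.ofEq _ _ hrange2).finrank_eq, finrank_top, hBa]
  have hfrG : Module.finrank (ZMod 2) ↥(LinearMap.range G)
      = Module.finrank (ZMod 2) ↥(LinearMap.ker ψ₁) :=
    (LinearEquiv.ofEq _ _ hrangeG).finrank_eq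
  have hrn1 : (b + d) * a + Module.finrank (ZMod 2) ↥Q = (b + d) * (a + c) := by
    rw [← hR1, ← hM, hQdef]; exact LinearMap.finrank_range_add_finrank_ker φ₁
  have hrn2 : b * a + Module.finrank (ZMod 2) ↥(LinearMap.range G) = b * (a + c) := by
    rw [← hR2, ← hBn, hfrG]; exact LinearMap.finrank_range_add_finrank_ker ψ₁
  have hrn3 := LinearMap.finrank_range_add_finrank_ker G
  -- arithmetic
  set r := Module.finrank (ZMod 2) ↥(LinearMap.range G) with hr
  set k := Module.finrank (ZMod 2) ↥(LinearMap.ker G) with hk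
  set fq := Module.finrank (ZMod 2) ↥Q with hfq
  -- conclude k = c * d, then count
  have hr' : r = b * c := by
    have h2 : b * a + r = b * a + b * c := by rw [hrn2]; ring
    exact Nat.add_left_cancel h2
  have hfq' : fq = (b + d) * c := by
    have h2 : (b + d) * a + fq = (b + d) * a + (b + d) * c := by rw [hrn1]; ring
    exact Nat.add_left_cancel h2
  have hkval : k = c * d := by
    have h1 : r + k = b * c + d * c := by rw [hrn3, hfq', Nat.add_mul]
    rw [hr'] at h1
    rw [Nat.add_left_cancel h1, Nat.mul_comm]
  have : Fintype ↥(LinearMap.ker G) := Fintype.ofFinite _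
  rw [Nat.card_eq_fintype_card, Module.card_eq_pow_finrank (K := ZMod 2), ZMod.card, ← hk, hkval]
  congr 1
  simp [Nat.add_sub_cancel_left]
end

section
/- Let m, n, a, b be nonnegative integers with a ≤ n and b ≤ m. Then ∑_{T} #Inj(𝔽₂^a, ker T) · #Inj(𝔽₂^b, ker Tᵀ) = #Inj(𝔽₂^a, 𝔽₂^n) · #Inj(𝔽₂^b, 𝔽₂^m) · 2^{(n−a)(m−b)}, where the sum is over all m×n matrices T over 𝔽₂, ker T ⊆ 𝔽₂^n is the kernel of T and ker Tᵀ ⊆ 𝔽₂^m is the kernel of its transpose. -/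
open Matrix

/-- `#Inj(A, B)`: the number of injective `𝔽₂`-linear maps between two `𝔽₂`-modules. -/
noncomputable def injCount (A B : Type) [AddCommGroup A] [Module (ZMod 2) A]
    [AddCommGroup B] [Module (ZMod 2) B] : ℕ :=
  Nat.card {f : A →ₗ[ZMod 2] B // Function.Injective f}

section Aux

open LinearMap Module

local instance : Fact (Nat.Prime 2) := ⟨Nat.prime_two⟩

private lemma card_hom (V W : Type) [AddCommGroup V] [Module (ZMod 2) V]
    [AddCommGroup W] [Module (ZMod 2) W] [Module.Finite (ZMod 2) V]
    [Module.Finite (ZMod 2) W] :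
    Nat.card (V →ₗ[ZMod 2] W) =
      2 ^ (Module.finrank (ZMod 2) V * Module.finrank (ZMod 2) W) := by
  have hV : Finite V := Module.finite_of_finite (ZMod 2)
  have hW : Finite W := Module.finite_of_finite (ZMod 2)
  have hL : Finite (V →ₗ[ZMod 2] W) :=
    Finite.of_injective (fun f => (f : V → W)) DFunLike.coe_injective
  cases nonempty_fintype (V →ₗ[ZMod 2] W)
  rw [Nat.card_eq_fintype_card, card_eq_pow_finrank (K := ZMod 2), ZMod.card,
    Module.finrank_linearMap]

/-- `injCount` into a submodule counted as maps into the ambient space with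
constrained range. -/
private lemma injCount_submodule (A W : Type) [AddCommGroup A] [Module (ZMod 2) A]
    [AddCommGroup W] [Module (ZMod 2) W] (K : Submodule (ZMod 2) W) :
    injCount A K =
      Nat.card {f : A →ₗ[ZMod 2] W //
        Function.Injective f ∧ LinearMap.range f ≤ K} := by
  refine Nat.card_congr ⟨fun f => ⟨K.subtype ∘ₗ f.1, ?_, ?_⟩,
    fun f => ⟨(f.1).codRestrict K (fun x => f.2.2 ⟨x, rfl⟩), fun x y hxy => ?_⟩, ?_, ?_⟩
  · exact Subtype.coe_injective.comp f.2
  · exact (LinearMap.range_comp_le_range _ _).trans (by rw [Submodule.range_subtype])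
  · exact f.2.1 (congrArg Subtype.val hxy)
  · intro f; apply Subtype.ext; ext x; rfl
  · intro f; apply Subtype.ext; ext x; rfl

private lemma card_subtype_sum {α : Type*} [Fintype α] (r : α → Prop) [DecidablePred r] :
    Nat.card {x : α // r x} = ∑ x : α, if r x then 1 else 0 := by
  rw [Nat.card_eq_fintype_card, Fintype.card_subtype, Finset.card_filter]

private lemma nat_card_and {α : Type*} [Fintype α] (p q : α → Prop) [DecidablePred p]
    [DecidablePred q] :
    Nat.card {x : α // p x ∧ q x} = ∑ x : {x : α // p x}, if q x.1 then 1 else 0 := by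
  rw [← Nat.card_congr (Equiv.subtypeSubtypeEquivSubtypeInter p q),
    card_subtype_sum (fun x : {x : α // p x} => q x.1)]

/-- The key count: for fixed injections `f`, `g`, the number of matrices `T` killing the
range of `f` whose transpose kills the range of `g` is `2 ^ ((n-a)*(m-b))`. -/
private lemma card_matrix_cond (m n a b : ℕ)
    (f : (Fin a → ZMod 2) →ₗ[ZMod 2] (Fin n → ZMod 2)) (hf : Function.Injective f)
    (g : (Fin b → ZMod 2) →ₗ[ZMod 2] (Fin m → ZMod 2)) (hg : Function.Injective g) :
    Nat.card {T : Matrix (Fin m) (Fin n) (ZMod 2) //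
        LinearMap.range f ≤ LinearMap.ker T.mulVecLin ∧
          LinearMap.range g ≤ LinearMap.ker Tᵀ.mulVecLin} =
      2 ^ ((n - a) * (m - b)) := by
  classical
  set G : Matrix (Fin m) (Fin b) (ZMod 2) := LinearMap.toMatrix' g with hGdef
  have hG : G.mulVecLin = g := by
    rw [← Matrix.toLin'_apply', hGdef, Matrix.toLin'_toMatrix']
  set K : Submodule (ZMod 2) (Fin m → ZMod 2) := LinearMap.ker (Gᵀ.mulVecLin) with hK
  -- rewrite the transpose condition
  have hcond : ∀ T : Matrix (Fin m) (Fin n) (ZMod 2),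
      (LinearMap.range g ≤ LinearMap.ker Tᵀ.mulVecLin) ↔
        LinearMap.range T.mulVecLin ≤ K := by
    intro T
    rw [hK, LinearMap.range_le_ker_iff, LinearMap.range_le_ker_iff, ← hG,
      ← Matrix.mulVecLin_mul, ← Matrix.mulVecLin_mul]
    constructor
    · intro h
      have h0 : Tᵀ * G = 0 := by
        apply Matrix.toLin'.injective
        rw [Matrix.toLin'_apply', Matrix.toLin'_apply', h, Matrix.mulVecLin_zero]
      have : Gᵀ * T = 0 := by
        have := congrArg Matrix.transpose h0
        simpa [Matrix.transpose_mul] using this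
      rw [this, Matrix.mulVecLin_zero]
    · intro h
      have h0 : Gᵀ * T = 0 := by
        apply Matrix.toLin'.injective
        rw [Matrix.toLin'_apply', Matrix.toLin'_apply', h, Matrix.mulVecLin_zero]
      have : Tᵀ * G = 0 := by
        have := congrArg Matrix.transpose h0
        simpa [Matrix.transpose_mul] using this
      rw [this, Matrix.mulVecLin_zero]
  -- transfer to linear maps
  have e1 : {T : Matrix (Fin m) (Fin n) (ZMod 2) //
        LinearMap.range f ≤ LinearMap.ker T.mulVecLin ∧
          LinearMap.range g ≤ LinearMap.ker Tᵀ.mulVecLin} ≃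
      {L : (Fin n → ZMod 2) →ₗ[ZMod 2] (Fin m → ZMod 2) //
        LinearMap.range f ≤ LinearMap.ker L ∧ LinearMap.range L ≤ K} := by
    refine (Equiv.subtypeEquivRight (fun T => by rw [hcond T])).trans ?_
    exact (Matrix.toLin'.toEquiv.subtypeEquiv (fun T => by
      simp [Matrix.toLin'_apply']))
  -- the constrained maps are homs from the quotient to K
  have e2 : {L : (Fin n → ZMod 2) →ₗ[ZMod 2] (Fin m → ZMod 2) //
        LinearMap.range f ≤ LinearMap.ker L ∧ LinearMap.range L ≤ K} ≃
      (((Fin n → ZMod 2) ⧸ LinearMap.range f) →ₗ[ZMod 2] K) := by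
    refine ⟨fun L => (LinearMap.range f).liftQ
        ((L.1).codRestrict K (fun x => L.2.2 ⟨x, rfl⟩)) ?_,
      fun L' => ⟨K.subtype ∘ₗ L' ∘ₗ (LinearMap.range f).mkQ, ?_, ?_⟩, ?_, ?_⟩
    · rw [LinearMap.ker_codRestrict]; exact L.2.1
    · intro x hx
      simp only [LinearMap.mem_ker, LinearMap.comp_apply]
      have : ((LinearMap.range f).mkQ) x = 0 := by
        rwa [Submodule.mkQ_apply, Submodule.Quotient.mk_eq_zero]
      rw [this, map_zero, map_zero]
    · exact (LinearMap.range_comp_le_range _ _).trans (by rw [Submodule.range_subtype])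
    · intro L
      apply Subtype.ext
      ext x
      simp [Submodule.liftQ_apply]
    · intro L'
      apply Submodule.linearMap_qext
      ext x
      simp [Submodule.liftQ_apply]
  rw [Nat.card_congr (e1.trans e2), card_hom]
  -- now compute the two finranks
  have hfr1 : finrank (ZMod 2) ((Fin n → ZMod 2) ⧸ LinearMap.range f) = n - a := by
    have h1 : finrank (ZMod 2) (LinearMap.range f) = a := by
      rw [LinearMap.finrank_range_of_inj hf, Module.finrank_fin_fun]
    have h2 := Submodule.finrank_quotient_add_finrank (LinearMap.range f)
    rw [h1, Module.finrank_fin_fun] at h2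
    omega
  have hfr2 : finrank (ZMod 2) (LinearMap.ker (Gᵀ.mulVecLin)) = m - b := by
    have h1 := LinearMap.finrank_range_add_finrank_ker (Gᵀ.mulVecLin)
    have h2 : finrank (ZMod 2) (LinearMap.range (Gᵀ.mulVecLin)) = b := by
      have h3 : (Gᵀ).rank = G.rank := Matrix.rank_transpose G
      have hGr : G.rank = b := by
        rw [Matrix.rank, hG, LinearMap.finrank_range_of_inj hg, Module.finrank_fin_fun]
      rw [show finrank (ZMod 2) (LinearMap.range (Gᵀ.mulVecLin)) = (Gᵀ).rank from rfl,
        h3, hGr]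
    rw [h2, Module.finrank_fin_fun] at h1
    omega
  rw [hfr1, show finrank (ZMod 2) K = finrank (ZMod 2) (LinearMap.ker (Gᵀ.mulVecLin)) from rfl,
    hfr2]

end Aux

/-- Summing over all `m×n` matrices `T` over `𝔽₂` the number of injections of `𝔽₂^a` into
`ker T` times the number of injections of `𝔽₂^b` into `ker Tᵀ` gives
`#Inj(𝔽₂^a, 𝔽₂^n) · #Inj(𝔽₂^b, 𝔽₂^m) · 2^{(n-a)(m-b)}`. -/
theorem stmt9 (m n a b : ℕ) (han : a ≤ n) (hbm : b ≤ m) :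
    ∑ T : Matrix (Fin m) (Fin n) (ZMod 2),
        injCount (Fin a → ZMod 2) (LinearMap.ker T.mulVecLin) *
          injCount (Fin b → ZMod 2) (LinearMap.ker Tᵀ.mulVecLin) =
      injCount (Fin a → ZMod 2) (Fin n → ZMod 2) *
        injCount (Fin b → ZMod 2) (Fin m → ZMod 2) * 2 ^ ((n - a) * (m - b)) := by
  classical
  have hFA : Finite ((Fin a → ZMod 2) →ₗ[ZMod 2] (Fin n → ZMod 2)) :=
    Finite.of_injective (fun f => (f : _ → _)) DFunLike.coe_injective
  have hFB : Finite ((Fin b → ZMod 2) →ₗ[ZMod 2] (Fin m → ZMod 2)) :=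
    Finite.of_injective (fun f => (f : _ → _)) DFunLike.coe_injective
  letI : Fintype ((Fin a → ZMod 2) →ₗ[ZMod 2] (Fin n → ZMod 2)) := Fintype.ofFinite _
  letI : Fintype ((Fin b → ZMod 2) →ₗ[ZMod 2] (Fin m → ZMod 2)) := Fintype.ofFinite _
  calc
    ∑ T : Matrix (Fin m) (Fin n) (ZMod 2),
        injCount (Fin a → ZMod 2) (LinearMap.ker T.mulVecLin) *
          injCount (Fin b → ZMod 2) (LinearMap.ker Tᵀ.mulVecLin)
      = ∑ T : Matrix (Fin m) (Fin n) (ZMod 2),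
          (∑ f : {f : (Fin a → ZMod 2) →ₗ[ZMod 2] (Fin n → ZMod 2) // Function.Injective f},
              if LinearMap.range f.1 ≤ LinearMap.ker T.mulVecLin then 1 else 0) *
            (∑ g : {g : (Fin b → ZMod 2) →ₗ[ZMod 2] (Fin m → ZMod 2) // Function.Injective g},
              if LinearMap.range g.1 ≤ LinearMap.ker Tᵀ.mulVecLin then 1 else 0) := by
        refine Finset.sum_congr rfl fun T _ => ?_
        rw [injCount_submodule, injCount_submodule, nat_card_and, nat_card_and]
    _ = ∑ f : {f : (Fin a → ZMod 2) →ₗ[ZMod 2] (Fin n → ZMod 2) // Function.Injective f},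
          ∑ g : {g : (Fin b → ZMod 2) →ₗ[ZMod 2] (Fin m → ZMod 2) // Function.Injective g},
            ∑ T : Matrix (Fin m) (Fin n) (ZMod 2),
              if LinearMap.range f.1 ≤ LinearMap.ker T.mulVecLin ∧
                  LinearMap.range g.1 ≤ LinearMap.ker Tᵀ.mulVecLin then 1 else 0 := by
        have step : ∀ T : Matrix (Fin m) (Fin n) (ZMod 2),
            (∑ f : {f : (Fin a → ZMod 2) →ₗ[ZMod 2] (Fin n → ZMod 2) // Function.Injective f},
                if LinearMap.range f.1 ≤ LinearMap.ker T.mulVecLin then 1 else 0) *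
              (∑ g : {g : (Fin b → ZMod 2) →ₗ[ZMod 2] (Fin m → ZMod 2) // Function.Injective g},
                if LinearMap.range g.1 ≤ LinearMap.ker Tᵀ.mulVecLin then 1 else 0) =
            ∑ f : {f : (Fin a → ZMod 2) →ₗ[ZMod 2] (Fin n → ZMod 2) // Function.Injective f},
              ∑ g : {g : (Fin b → ZMod 2) →ₗ[ZMod 2] (Fin m → ZMod 2) // Function.Injective g},
                if LinearMap.range f.1 ≤ LinearMap.ker T.mulVecLin ∧
                    LinearMap.range g.1 ≤ LinearMap.ker Tᵀ.mulVecLin then 1 else 0 := by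
          intro T
          rw [Finset.sum_mul_sum]
          refine Finset.sum_congr rfl fun f _ => Finset.sum_congr rfl fun g _ => ?_
          rw [ite_zero_mul_ite_zero, mul_one]
        rw [Finset.sum_congr rfl fun T _ => step T, Finset.sum_comm]
        refine Finset.sum_congr rfl fun f _ => Finset.sum_comm
    _ = ∑ f : {f : (Fin a → ZMod 2) →ₗ[ZMod 2] (Fin n → ZMod 2) // Function.Injective f},
          ∑ g : {g : (Fin b → ZMod 2) →ₗ[ZMod 2] (Fin m → ZMod 2) // Function.Injective g},
            (2 ^ ((n - a) * (m - b)) : ℕ) := by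
        refine Finset.sum_congr rfl fun f _ => Finset.sum_congr rfl fun g _ => ?_
        rw [← card_subtype_sum, card_matrix_cond m n a b f.1 f.2 g.1 g.2]
    _ = injCount (Fin a → ZMod 2) (Fin n → ZMod 2) *
          injCount (Fin b → ZMod 2) (Fin m → ZMod 2) * 2 ^ ((n - a) * (m - b)) := by
        simp only [Finset.sum_const, Finset.card_univ, smul_eq_mul]
        rw [injCount, injCount, Nat.card_eq_fintype_card, Nat.card_eq_fintype_card, mul_assoc]
end

section
/- Let ℒ be a finite-dimensional 𝔽₂-vector space, let u be an integer, let a be a nonnegative integer, and let λ : 𝔽₂^a → ℒ be an 𝔽₂-linear map. Then the limit as n → ∞ (over integers n ≥ max(u,0)) of ∑_{c = max(u,0)}^{n} P^Mat(c | (n−u)×n) · (#ℒ)^{−c} · ∑_{L} N(ι : L∘ι = λ) exists and equals (#ℒ)^{−a} · 2^{au}, where the inner sum is over all 𝔽₂-linear maps L : 𝔽₂^c → ℒ and N(ι : L∘ι = λ) denotes the number of injective 𝔽₂-linear maps ι : 𝔽₂^a → 𝔽₂^c with L∘ι = λ. -/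
open Matrix

/-- `P^Mat(j | m×n)`: the probability that a uniformly random `m×n` matrix over `𝔽₂`
has kernel of dimension `j`. -/
noncomputable def PMat (m n j : ℕ) : ℝ :=
  (Nat.card {T : Matrix (Fin m) (Fin n) (ZMod 2) //
      Module.finrank (ZMod 2) (LinearMap.ker T.mulVecLin) = j} : ℝ) / 2 ^ (m * n)

/-!
For a fixed injective `ι : 𝔽₂^a → 𝔽₂^c`, the maps `L` with `L ∘ ι = λ` form a coset of the maps
vanishing on `im ι`, so there are `(#ℒ)^(c-a)` of them and the weight `(#ℒ)^(-c)` leaves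
`(#ℒ)^(-a) · #Inj(𝔽₂^a, 𝔽₂^c)`. Averaging `#Inj(𝔽₂^a, ker T)` over all `m × n` matrices `T` is a
double count: each injective `ι : 𝔽₂^a → 𝔽₂^n` is killed by exactly `2^(m(n-a))` matrices, so the
average is `#Inj(𝔽₂^a, 𝔽₂^n) / 2^(ma) = ∏_{i<a} (2^n - 2^i) / 2^m`. With `m = n - u` each factor
tends to `2^u`.
-/

open Module Function

section Counting

variable {K V W A : Type*} [Field K] [AddCommGroup V] [Module K V] [AddCommGroup W] [Module K W]
  [AddCommGroup A] [Module K A]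

theorem card_injective_linearMap_fin [Fintype K] [FiniteDimensional K V] {a : ℕ}
    (ha : a ≤ finrank K V) :
    Nat.card {f : (Fin a → K) →ₗ[K] V // Injective f} =
      ∏ i : Fin a, (Fintype.card K ^ finrank K V - Fintype.card K ^ i.val) := by
  have : Finite V := Module.finite_of_finite K
  rw [← card_linearIndependent ha]
  refine (Nat.card_congr <| Equiv.subtypeEquiv (LinearEquiv.piRing K V (Fin a) K).symm.toEquiv
    fun v => ?_).symm
  rw [linearIndependent_iff_injective_fintypeLinearCombination]
  congr!
  ext g
  simp [LinearEquiv.piRing_symm_apply, Fintype.linearCombination_apply]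

theorem card_injective_linearMap_eq_zero [FiniteDimensional K V]
    (h : finrank K V < finrank K A) : Nat.card {f : A →ₗ[K] V // Injective f} = 0 :=
  have : IsEmpty {f : A →ₗ[K] V // Injective f} :=
    ⟨fun f => h.not_ge (LinearMap.finrank_le_finrank_of_injective f.2)⟩
  Nat.card_of_isEmpty

theorem card_injective_linearMap_congr [FiniteDimensional K V] [FiniteDimensional K W]
    (h : finrank K V = finrank K W) :
    Nat.card {f : A →ₗ[K] V // Injective f} = Nat.card {f : A →ₗ[K] W // Injective f} :=
  Nat.card_congr <| Equiv.subtypeEquiv (LinearEquiv.ofFinrankEq V W h).congrRight.toEquiv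
    fun f => (EquivLike.comp_injective f (LinearEquiv.ofFinrankEq V W h)).symm

theorem card_injective_linearMap_ker (g : V →ₗ[K] W) :
    Nat.card {f : A →ₗ[K] LinearMap.ker g // Injective f} =
      Nat.card {φ : A →ₗ[K] V // Injective φ ∧ g ∘ₗ φ = 0} :=
  Nat.card_congr
    { toFun f := ⟨(LinearMap.ker g).subtype ∘ₗ f.1, Subtype.val_injective.comp f.2,
        LinearMap.ext fun x => (f.1 x).2⟩
      invFun φ := ⟨LinearMap.codRestrict _ φ.1 fun x => LinearMap.congr_fun φ.2.2 x,
        fun _ _ hxy => φ.2.1 (congrArg Subtype.val hxy)⟩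
      left_inv _ := rfl
      right_inv _ := rfl }

theorem card_linearMap [FiniteDimensional K V] :
    Nat.card (V →ₗ[K] W) = Nat.card W ^ finrank K V := by
  rw [← Nat.card_congr ((Module.finBasis K V).constr K).toEquiv, Nat.card_fun, Nat.card_fin]

theorem card_linearMap_comp_eq_zero [FiniteDimensional K V] {ι : A →ₗ[K] V} (hι : Injective ι) :
    Nat.card {M : V →ₗ[K] W // M ∘ₗ ι = 0} = Nat.card W ^ (finrank K V - finrank K A) := by
  let e : {M : V →ₗ[K] W // M ∘ₗ ι = 0} ≃ (V ⧸ LinearMap.range ι →ₗ[K] W) :=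
    { toFun M := (LinearMap.range ι).liftQ M.1 (LinearMap.range_le_ker_iff.2 M.2)
      invFun f := ⟨f ∘ₗ (LinearMap.range ι).mkQ, LinearMap.ext fun x => by
        simp [(Submodule.Quotient.mk_eq_zero _).2 (LinearMap.mem_range_self ι x)]⟩
      left_inv M := Subtype.ext (Submodule.liftQ_mkQ _ _ _)
      right_inv f := Submodule.linearMap_qext _ (Submodule.liftQ_mkQ _ _ _) }
  rw [Nat.card_congr e, card_linearMap,
    ← Submodule.finrank_quotient_add_finrank (LinearMap.range ι),
    LinearMap.finrank_range_of_inj hι, Nat.add_sub_cancel]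

theorem card_linearMap_comp_eq [FiniteDimensional K V] {ι : A →ₗ[K] V} (hι : Injective ι)
    (lam : A →ₗ[K] W) :
    Nat.card {M : V →ₗ[K] W // M ∘ₗ ι = lam} = Nat.card W ^ (finrank K V - finrank K A) := by
  obtain ⟨π, hπ⟩ := ι.exists_leftInverse_of_injective (LinearMap.ker_eq_bot.2 hι)
  rw [← card_linearMap_comp_eq_zero hι]
  refine Nat.card_congr (Equiv.subtypeEquiv (Equiv.subRight (lam ∘ₗ π)) fun M => ?_)
  simp [LinearMap.sub_comp, LinearMap.comp_assoc, hπ, sub_eq_zero]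

theorem card_injective_comp_eq [Finite K] [FiniteDimensional K A] [FiniteDimensional K V]
    [Finite W] (lam : A →ₗ[K] W) :
    Nat.card {p : (V →ₗ[K] W) × (A →ₗ[K] V) // Injective p.2 ∧ p.1 ∘ₗ p.2 = lam} =
      Nat.card {ι : A →ₗ[K] V // Injective ι} * Nat.card W ^ (finrank K V - finrank K A) := by
  have : Finite (A →ₗ[K] V) := Module.finite_of_finite K
  have : Fintype {ι : A →ₗ[K] V // Injective ι} := Fintype.ofFinite _
  let e : {p : (V →ₗ[K] W) × (A →ₗ[K] V) // Injective p.2 ∧ p.1 ∘ₗ p.2 = lam} ≃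
      Σ ι : {ι : A →ₗ[K] V // Injective ι}, {M : V →ₗ[K] W // M ∘ₗ ι = lam} :=
    { toFun p := ⟨⟨p.1.2, p.2.1⟩, p.1.1, p.2.2⟩
      invFun q := ⟨(q.2.1, q.1.1), q.1.2, q.2.2⟩
      left_inv _ := rfl
      right_inv _ := rfl }
  have : Finite (V →ₗ[K] W) := Finite.of_equiv _ ((Module.finBasis K V).constr K).toEquiv
  rw [Nat.card_congr e, Nat.card_sigma,
    Finset.sum_congr rfl fun ι _ => card_linearMap_comp_eq ι.2 lam, Finset.sum_const,
    Finset.card_univ, smul_eq_mul, Fintype.card_eq_nat_card]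

theorem zpow_neg_finrank_mul_card_injective_comp_eq [Finite K] [FiniteDimensional K A]
    [FiniteDimensional K V] [Finite W] (lam : A →ₗ[K] W) :
    (Nat.card W : ℝ) ^ (-(finrank K V : ℤ)) *
        Nat.card {p : (V →ₗ[K] W) × (A →ₗ[K] V) // Injective p.2 ∧ p.1 ∘ₗ p.2 = lam} =
      (Nat.card W : ℝ) ^ (-(finrank K A : ℤ)) * Nat.card {ι : A →ₗ[K] V // Injective ι} := by
  rw [card_injective_comp_eq]
  rcases le_or_gt (finrank K A) (finrank K V) with h | h
  · have hW : (Nat.card W : ℝ) ≠ 0 := by exact_mod_cast Nat.card_pos.ne'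
    rw [Nat.cast_mul, Nat.cast_pow, ← zpow_natCast, Nat.cast_sub h, mul_left_comm, ← zpow_add₀ hW]
    ring_nf
  · simp [card_injective_linearMap_eq_zero h]

theorem sum_card_finrank_ker_mul_card_injective [Fintype K] [FiniteDimensional K A] (m n : ℕ) :
    ∑ c ∈ Finset.Icc (n - m) n,
        Nat.card {T : Matrix (Fin m) (Fin n) K // finrank K (LinearMap.ker T.mulVecLin) = c} *
          Nat.card {f : A →ₗ[K] (Fin c → K) // Injective f} =
      Nat.card {f : A →ₗ[K] (Fin n → K) // Injective f} *
        Fintype.card K ^ (m * (n - finrank K A)) := by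
  classical
  have hker (T : Matrix (Fin m) (Fin n) K) :
      finrank K (LinearMap.ker T.mulVecLin) ∈ Finset.Icc (n - m) n := by
    have hrank := LinearMap.finrank_range_add_finrank_ker T.mulVecLin
    have hrange := Submodule.finrank_le (LinearMap.range T.mulVecLin)
    have hkerle := Submodule.finrank_le (LinearMap.ker T.mulVecLin)
    rw [Module.finrank_fin_fun] at hrank hrange hkerle
    rw [Finset.mem_Icc]
    omega
  have : Fintype ((Fin n → K) →ₗ[K] (Fin m → K)) := Fintype.ofEquiv _ Matrix.toLin'.toEquiv
  have : Finite (A →ₗ[K] (Fin n → K)) := Module.finite_of_finite K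
  calc _ = ∑ c ∈ Finset.Icc (n - m) n,
          ∑ T : Matrix (Fin m) (Fin n) K with finrank K (LinearMap.ker T.mulVecLin) = c,
        Nat.card {f : A →ₗ[K] LinearMap.ker T.mulVecLin // Injective f} := by
        refine Finset.sum_congr rfl fun c _ => ?_
        rw [Finset.sum_congr rfl fun T hT => card_injective_linearMap_congr (W := Fin c → K)
          (by simpa using (Finset.mem_filter.1 hT).2), Finset.sum_const, smul_eq_mul,
          Nat.card_eq_fintype_card, Fintype.card_subtype]
    _ = ∑ T : Matrix (Fin m) (Fin n) K,
        Nat.card {f : A →ₗ[K] LinearMap.ker T.mulVecLin // Injective f} :=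
        Finset.sum_fiberwise_of_maps_to (fun T _ => hker T) _
    _ = ∑ g : (Fin n → K) →ₗ[K] (Fin m → K),
        Nat.card {φ : A →ₗ[K] (Fin n → K) // Injective φ ∧ g ∘ₗ φ = 0} := by
        simp_rw [card_injective_linearMap_ker]
        exact Fintype.sum_equiv Matrix.toLin'.toEquiv _ _ fun T => by simp [Matrix.toLin'_apply']
    _ = Nat.card {p : ((Fin n → K) →ₗ[K] (Fin m → K)) × (A →ₗ[K] (Fin n → K)) //
          Injective p.2 ∧ p.1 ∘ₗ p.2 = 0} := by
        rw [Nat.card_congr (Equiv.subtypeProdEquivSigmaSubtype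
          fun (g : (Fin n → K) →ₗ[K] (Fin m → K)) (φ : A →ₗ[K] (Fin n → K)) =>
            Injective φ ∧ g ∘ₗ φ = 0), Nat.card_sigma]
    _ = _ := by
        rw [card_injective_comp_eq, Nat.card_fun (α := Fin m) (β := K), Nat.card_fin,
          Nat.card_eq_fintype_card (α := K), Module.finrank_fin_fun, pow_mul]

end Counting

theorem sum_PMat_mul_card_injective (m n a : ℕ) (ha : a ≤ n) :
    ∑ c ∈ Finset.Icc (n - m) n, PMat m n c *
        Nat.card {f : (Fin a → ZMod 2) →ₗ[ZMod 2] (Fin c → ZMod 2) // Injective f} =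
      ∏ i : Fin a, (((2 : ℝ) ^ n - 2 ^ (i : ℕ)) / 2 ^ m) := by
  have hcount := sum_card_finrank_ker_mul_card_injective (K := ZMod 2) (A := Fin a → ZMod 2) m n
  rw [card_injective_linearMap_fin (by simpa using ha)] at hcount
  have hcast := congrArg (Nat.cast : ℕ → ℝ) hcount
  simp only [Nat.cast_sum, Nat.cast_mul, Nat.cast_prod, Nat.cast_pow, ZMod.card,
    Module.finrank_fin_fun] at hcast
  simp only [PMat, div_mul_eq_mul_div, ← Finset.sum_div, hcast, Finset.prod_div_distrib,
    Finset.prod_const, Finset.card_univ, Fintype.card_fin]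
  rw [Finset.prod_congr rfl fun (i : Fin a) _ =>
    Nat.cast_sub (Nat.pow_le_pow_right two_pos (i.2.le.trans ha))]
  obtain ⟨k, rfl⟩ := Nat.exists_eq_add_of_le ha
  push_cast
  rw [Nat.add_sub_cancel_left]
  field_simp
  ring

open Filter Topology

theorem tendsto_two_pow_sub_div_two_pow_toNat_sub (u : ℤ) (i : ℕ) :
    Tendsto (fun n : ℕ => ((2 : ℝ) ^ n - 2 ^ i) / 2 ^ ((n : ℤ) - u).toNat) atTop (𝓝 (2 ^ u)) := by
  have hlim : Tendsto (fun n : ℕ => (2 : ℝ) ^ u - 2 ^ i * 2 ^ u * 2⁻¹ ^ n) atTop (𝓝 (2 ^ u)) := by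
    simpa using ((tendsto_pow_atTop_nhds_zero_of_lt_one (by norm_num : (0 : ℝ) ≤ 2⁻¹)
      (by norm_num)).const_mul (2 ^ i * 2 ^ u)).const_sub ((2 : ℝ) ^ u)
  refine hlim.congr' ?_
  filter_upwards [eventually_ge_atTop u.toNat] with n hn
  have h : (2 : ℝ) ^ ((n : ℤ) - u).toNat = 2 ^ n / 2 ^ u := by
    rw [← zpow_natCast, Int.toNat_of_nonneg (by omega), zpow_sub₀ two_ne_zero, zpow_natCast]
  rw [h, inv_pow]
  field_simp

theorem tendsto_prod_two_pow_sub_div_two_pow_toNat_sub (u : ℤ) (a : ℕ) :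
    Tendsto (fun n : ℕ => ∏ i : Fin a, (((2 : ℝ) ^ n - 2 ^ (i : ℕ)) / 2 ^ ((n : ℤ) - u).toNat))
      atTop (𝓝 (2 ^ ((a : ℤ) * u))) := by
  have := tendsto_finsetProd Finset.univ fun (i : Fin a) _ =>
    tendsto_two_pow_sub_div_two_pow_toNat_sub u i
  rwa [Finset.prod_const, Finset.card_univ, Fintype.card_fin, ← zpow_natCast, ← _root_.zpow_mul,
    mul_comm] at this

/-- Proposition `V_consis`: for a finite-dimensional `𝔽₂`-vector space `ℒ`, an integer `u`,
and a linear map `λ : 𝔽₂^a → ℒ`, the sums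
`∑_{c = max(u,0)}^{n} P^Mat(c | (n-u)×n) · (#ℒ)^{-c} · ∑_{L : 𝔽₂^c →ₗ ℒ} #{ι : 𝔽₂^a ↪ 𝔽₂^c
injective, L∘ι = λ}` (the inner double sum being the number of pairs `(L, ι)`)
converge, as `n → ∞`, to `(#ℒ)^{-a} · 2^{au}`. -/
theorem stmt14 (L : Type) [AddCommGroup L] [Module (ZMod 2) L]
    [FiniteDimensional (ZMod 2) L] (u : ℤ) (a : ℕ)
    (lam : (Fin a → ZMod 2) →ₗ[ZMod 2] L) :
    Filter.Tendsto
      (fun n : ℕ =>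
        ∑ c ∈ Finset.Icc u.toNat n,
          PMat ((n : ℤ) - u).toNat n c * (Nat.card L : ℝ) ^ (-(c : ℤ)) *
            Nat.card {p : ((Fin c → ZMod 2) →ₗ[ZMod 2] L) ×
                ((Fin a → ZMod 2) →ₗ[ZMod 2] (Fin c → ZMod 2)) //
              Function.Injective p.2 ∧ p.1 ∘ₗ p.2 = lam})
      Filter.atTop
      (nhds ((Nat.card L : ℝ) ^ (-(a : ℤ)) * 2 ^ ((a : ℤ) * u))) := by
  have : Finite L := Module.finite_of_finite (ZMod 2)
  refine ((tendsto_prod_two_pow_sub_div_two_pow_toNat_sub u a).const_mul _).congr' ?_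
  filter_upwards [eventually_ge_atTop (max a u.toNat)] with n hn
  have hu : u.toNat = n - ((n : ℤ) - u).toNat := by omega
  rw [hu, ← sum_PMat_mul_card_injective _ _ _ (le_of_max_le_left hn), Finset.mul_sum]
  refine Finset.sum_congr rfl fun c _ => ?_
  have hc := zpow_neg_finrank_mul_card_injective_comp_eq (V := Fin c → ZMod 2) lam
  rw [Module.finrank_fin_fun, Module.finrank_fin_fun] at hc
  rw [mul_assoc, hc, mul_left_comm]
end
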